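/- Let A : X → X, B : U → X, C : X → Y be bounded Hilbert-space operators and suppose the holomorphic function θ(z) = zC(I − zA)^{-1} zB (z ∈ ℂ^N a neighborhood of 0, zT := Σ z_k T_k) has a zero of multiplicity m ≥ 2 at 0. Then θ(z) = (zC)·θ̃(z) where θ̃(z) := (zA)^{m−2}(I − zA)^{-1} zB has a zero of multiplicity exactly m − 1 at 0. -/

import Mathlib

noncomputable section

open scoped ComplexConjugate

/-- A bundled separable complex Hilbert space. -/
structure HilbertSp : Type 1 where
  carrier : Type
  [iN : NormedAddCommGroup carrier]
  [iI : InnerProductSpace ℂ carrier]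
  [iC : CompleteSpace carrier]
  [iS : TopologicalSpace.SeparableSpace carrier]

attribute [instance] HilbertSp.iN HilbertSp.iI HilbertSp.iC HilbertSp.iS

variable {N : ℕ}

/-- The linear pencil `z ↦ Σₖ z_k T_k` associated with an `N`-tuple of operators. -/
def pencil {E F : Type*} [NormedAddCommGroup E] [NormedAddCommGroup F]
    [NormedSpace ℂ E] [NormedSpace ℂ F]
    (T : Fin N → (E →L[ℂ] F)) (z : Fin N → ℂ) : E →L[ℂ] F := ∑ k, z k • T k

/-- membership in the unit torus `𝕋^N` -/
def onTorus (ζ : Fin N → ℂ) : Prop := ∀ k, ‖ζ k‖ = 1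

/-- membership in the open unit polydisk `𝔻^N` -/
def inPolydisk (z : Fin N → ℂ) : Prop := ∀ k, ‖z k‖ < 1

/-- `θ` has a zero of multiplicity `m` at `z = 0`: it is holomorphic near `0` and the
homogeneous terms of its Taylor expansion of degree `< m` vanish while that of degree `m`
does not. -/
def HasZeroOfOrder {U Y : Type*} [NormedAddCommGroup U] [NormedAddCommGroup Y]
    [NormedSpace ℂ U] [NormedSpace ℂ Y]
    (θ : (Fin N → ℂ) → (U →L[ℂ] Y)) (m : ℕ) : Prop :=
  ∃ p : FormalMultilinearSeries ℂ (Fin N → ℂ) (U →L[ℂ] Y),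
    HasFPowerSeriesAt θ p 0 ∧ (∀ j, j < m → ∀ z : Fin N → ℂ, (p j) (fun _ => z) = 0) ∧
      (∃ z : Fin N → ℂ, (p m) (fun _ => z) ≠ 0)

/-- The product `(zL⁽¹⁾)(zL⁽²⁾)⋯(zL⁽ᵐ⁾) : Ysp m → Ysp 0` of linear pencils along a chain of
spaces, where `L j k : Ysp (j+1) → Ysp j` plays the role of `L_k^{(j+1)}`. -/
def chainMul {Ysp : ℕ → Type*} [∀ j, NormedAddCommGroup (Ysp j)] [∀ j, NormedSpace ℂ (Ysp j)]
    (L : (j : ℕ) → Fin N → (Ysp (j + 1) →L[ℂ] Ysp j)) (z : Fin N → ℂ) :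
    (m : ℕ) → (Ysp m →L[ℂ] Ysp 0)
  | 0 => ContinuousLinearMap.id ℂ (Ysp 0)
  | (m + 1) => (chainMul L z m).comp (pencil (L m) z)

/-- The product `(zR⁽ᵐ⁾)⋯(zR⁽¹⁾) : Usp 0 → Usp m` of linear pencils along a chain of
spaces, where `R j k : Usp j → Usp (j+1)` plays the role of `R_k^{(j+1)}`. -/
def chainMulR {Usp : ℕ → Type*} [∀ j, NormedAddCommGroup (Usp j)] [∀ j, NormedSpace ℂ (Usp j)]
    (R : (j : ℕ) → Fin N → (Usp j →L[ℂ] Usp (j + 1))) (z : Fin N → ℂ) :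
    (m : ℕ) → (Usp 0 →L[ℂ] Usp m)
  | 0 => ContinuousLinearMap.id ℂ (Usp 0)
  | (m + 1) => (pencil (R m) z).comp (chainMulR R z m)

/-- the Hilbert space direct sum `E ⊕ F` -/
abbrev hS (E F : Type*) := WithLp 2 (E × F)

section blocks

variable (E F : Type*) [NormedAddCommGroup E] [NormedAddCommGroup F]
  [NormedSpace ℂ E] [NormedSpace ℂ F]

/-- inclusion of the first summand -/
def inlL : E →L[ℂ] hS E F :=
  ((WithLp.prodContinuousLinearEquiv 2 ℂ E F).symm : E × F →L[ℂ] hS E F).comp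
    (ContinuousLinearMap.inl ℂ E F)

/-- inclusion of the second summand -/
def inrL : F →L[ℂ] hS E F :=
  ((WithLp.prodContinuousLinearEquiv 2 ℂ E F).symm : E × F →L[ℂ] hS E F).comp
    (ContinuousLinearMap.inr ℂ E F)

/-- projection onto the first summand -/
def fstL : hS E F →L[ℂ] E :=
  (ContinuousLinearMap.fst ℂ E F).comp
    (WithLp.prodContinuousLinearEquiv 2 ℂ E F : hS E F →L[ℂ] E × F)

/-- projection onto the second summand -/
def sndL : hS E F →L[ℂ] F :=
  (ContinuousLinearMap.snd ℂ E F).comp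
    (WithLp.prodContinuousLinearEquiv 2 ℂ E F : hS E F →L[ℂ] E × F)

end blocks

/-- the block operator `[[A,B],[C,D]] : X ⊕ U → X' ⊕ Y'` -/
def block2 {X U X' Y' : Type*} [NormedAddCommGroup X] [NormedAddCommGroup U]
    [NormedAddCommGroup X'] [NormedAddCommGroup Y']
    [NormedSpace ℂ X] [NormedSpace ℂ U] [NormedSpace ℂ X'] [NormedSpace ℂ Y']
    (A : X →L[ℂ] X') (B : U →L[ℂ] X') (C : X →L[ℂ] Y') (D : U →L[ℂ] Y') :
    hS X U →L[ℂ] hS X' Y' :=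
  (inlL X' Y').comp (A.comp (fstL X U)) + (inlL X' Y').comp (B.comp (sndL X U)) +
    (inrL X' Y').comp (C.comp (fstL X U)) + (inrL X' Y').comp (D.comp (sndL X U))

/-- the transfer function `θ_α(z) = zD + zC (1 - zA)⁻¹ zB` of the system
`α = (N; A, B, C, D; X, U, Y)` -/
def transfer {X U Y : Type*} [NormedAddCommGroup X] [NormedAddCommGroup U] [NormedAddCommGroup Y]
    [NormedSpace ℂ X] [NormedSpace ℂ U] [NormedSpace ℂ Y]
    (A : Fin N → (X →L[ℂ] X)) (B : Fin N → (U →L[ℂ] X)) (C : Fin N → (X →L[ℂ] Y))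
    (D : Fin N → (U →L[ℂ] Y)) (z : Fin N → ℂ) : U →L[ℂ] Y :=
  pencil D z + (pencil C z).comp ((Ring.inverse (1 - pencil A z)).comp (pencil B z))

/-- unitarity of a bounded operator between Hilbert spaces -/
def IsUnitaryOp {E F : Type*} [NormedAddCommGroup E] [InnerProductSpace ℂ E] [CompleteSpace E]
    [NormedAddCommGroup F] [InnerProductSpace ℂ F] [CompleteSpace F] (W : E →L[ℂ] F) : Prop :=
  (ContinuousLinearMap.adjoint W).comp W = 1 ∧ W.comp (ContinuousLinearMap.adjoint W) = 1

/-- the block operator `G_α` of a system, as an `N`-tuple -/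
def sysBlock {X U Y : Type*} [NormedAddCommGroup X] [NormedAddCommGroup U] [NormedAddCommGroup Y]
    [NormedSpace ℂ X] [NormedSpace ℂ U] [NormedSpace ℂ Y]
    (A : Fin N → (X →L[ℂ] X)) (B : Fin N → (U →L[ℂ] X)) (C : Fin N → (X →L[ℂ] Y))
    (D : Fin N → (U →L[ℂ] Y)) : Fin N → (hS X U →L[ℂ] hS X Y) :=
  fun k => block2 (A k) (B k) (C k) (D k)

/-- `α` is a conservative scattering system: `ζ G_α` is unitary for every `ζ ∈ 𝕋^N`. -/
def Conservative {X U Y : Type*} [NormedAddCommGroup X] [InnerProductSpace ℂ X] [CompleteSpace X]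
    [NormedAddCommGroup U] [InnerProductSpace ℂ U] [CompleteSpace U]
    [NormedAddCommGroup Y] [InnerProductSpace ℂ Y] [CompleteSpace Y]
    (A : Fin N → (X →L[ℂ] X)) (B : Fin N → (U →L[ℂ] X)) (C : Fin N → (X →L[ℂ] Y))
    (D : Fin N → (U →L[ℂ] Y)) : Prop :=
  ∀ ζ : Fin N → ℂ, onTorus ζ → IsUnitaryOp (pencil (sysBlock A B C D) ζ)

/-!
Restricted to a line `t ↦ t • z`, the geometric series gives `θ (t • z) = ∑ₙ tⁿ • zC (zA)ⁿ⁻² zB`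
(from `n = 2` on), so by uniqueness of one-variable power series the degree-`n` Taylor term of `θ`
is `zC (zA)ⁿ⁻² zB`. The vanishing of those with `n < m` kills the polynomial part of
`(I - zA)⁻¹ = (zA)ᵐ⁻² (I - zA)⁻¹ + ∑_{j < m-2} (zA)ʲ` after sandwiching between `zC` and `zB`,
which gives `θ = zC θ̃`. The same computation for `θ̃` shows that its Taylor terms vanish below
degree `m - 1` and that the one of degree `m - 1` is `(zA)ᵐ⁻² zB`, which is nonzero because
`zC (zA)ᵐ⁻² zB` is the nonzero degree-`m` term of `θ`.
-/

open Filter Topology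

namespace FormalMultilinearSeries

variable {𝕜 E : Type*} [NontriviallyNormedField 𝕜] [NormedAddCommGroup E] [NormedSpace 𝕜 E]

def ofCoeffs (c : ℕ → E) : FormalMultilinearSeries 𝕜 𝕜 E :=
  fun n => ContinuousMultilinearMap.mkPiRing 𝕜 (Fin n) (c n)

@[simp]
theorem ofCoeffs_apply_const (c : ℕ → E) (n : ℕ) (t : 𝕜) :
    ofCoeffs c n (fun _ => t) = t ^ n • c n := by
  simp [ofCoeffs]

theorem norm_ofCoeffs (c : ℕ → E) (n : ℕ) : ‖ofCoeffs (𝕜 := 𝕜) c n‖ = ‖c n‖ :=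
  ContinuousMultilinearMap.norm_mkPiRing _

theorem hasFPowerSeriesAt_ofCoeffs {c : ℕ → E} {f : 𝕜 → E}
    (hf : ∀ᶠ t in 𝓝 0, HasSum (fun n => t ^ n • c n) (f t)) :
    HasFPowerSeriesAt f (ofCoeffs c) 0 := by
  obtain ⟨ε, hε, hball⟩ := Metric.eventually_nhds_iff_ball.mp hf
  obtain ⟨t₀, ht₀, ht₀ε⟩ := NormedField.exists_norm_lt 𝕜 hε
  have hsum₀ := hball t₀ (by simpa using ht₀ε)
  refine ⟨‖t₀‖₊, ?_⟩
  constructor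
  · apply FormalMultilinearSeries.le_radius_of_tendsto (l := 0)
    simpa only [norm_ofCoeffs, coe_nnnorm, norm_smul, norm_pow, norm_zero, mul_comm]
      using hsum₀.summable.tendsto_atTop_zero.norm
  · simpa using ht₀
  · intro y hy
    have hy : ‖y‖ < ε := (by simpa using hy : ‖y‖ < ‖t₀‖).trans ht₀ε
    simpa only [ofCoeffs_apply_const, zero_add] using hball y (by simpa using hy)

end FormalMultilinearSeries

section TaylorCoefficients

variable {𝕜 E F : Type*} [NontriviallyNormedField 𝕜] [NormedAddCommGroup E] [NormedSpace 𝕜 E]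
  [NormedAddCommGroup F] [NormedSpace 𝕜 F]

theorem HasFPowerSeriesAt.apply_const_eq_of_hasSum_smul {f : E → F}
    {p : FormalMultilinearSeries 𝕜 E F} (hp : HasFPowerSeriesAt f p 0) (z : E) {c : ℕ → F}
    (hc : ∀ᶠ t in 𝓝 (0 : 𝕜), HasSum (fun n => t ^ n • c n) (f (t • z))) (n : ℕ) :
    p n (fun _ => z) = c n := by
  let line : 𝕜 →L[𝕜] E := (ContinuousLinearMap.id 𝕜 𝕜).smulRight z
  have hline : HasFPowerSeriesAt (f ∘ line) (p.compContinuousLinearMap line) 0 :=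
    (by simpa [line] using hp : HasFPowerSeriesAt f p (line 0)).compContinuousLinearMap
  have hcoeffs := hline.eq_formalMultilinearSeries
    (FormalMultilinearSeries.hasFPowerSeriesAt_ofCoeffs (f := f ∘ line) (by simpa [line] using hc))
  simpa only [FormalMultilinearSeries.compContinuousLinearMap_apply,
    FormalMultilinearSeries.ofCoeffs_apply_const, one_pow, one_smul, line,
    ContinuousLinearMap.smulRight_apply, ContinuousLinearMap.id_apply, Function.comp_def] using
    congr($hcoeffs n fun _ => 1)

end TaylorCoefficients

theorem Ring.inverse_one_sub_eq_pow_mul_add_geom_sum {R : Type*} [Ring R] {a : R}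
    (h : IsUnit (1 - a)) (k : ℕ) :
    Ring.inverse (1 - a) = a ^ k * Ring.inverse (1 - a) + ∑ j ∈ Finset.range k, a ^ j := by
  have hstep : Ring.inverse (1 - a) = 1 + a * Ring.inverse (1 - a) := by
    refine (sub_eq_iff_eq_add.mp ?_)
    rw [← one_sub_mul, Ring.mul_inverse_cancel _ h]
  induction k with
  | zero => simp
  | succ k ih =>
    calc Ring.inverse (1 - a)
        _ = a ^ k * (1 + a * Ring.inverse (1 - a)) + ∑ j ∈ Finset.range k, a ^ j := by
          rw [← hstep]; exact ih
        _ = _ := by rw [Finset.sum_range_succ, pow_succ]; noncomm_ring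

section Resolvent

variable {𝕜 E F R : Type*} [NontriviallyNormedField 𝕜] [NormedAddCommGroup E] [NormedSpace 𝕜 E]
  [NormedAddCommGroup F] [NormedSpace 𝕜 F] [NormedRing R] [NormedAlgebra 𝕜 R]
  [HasSummableGeomSeries R]

theorem hasSum_pow_smul_map_geom_shift (L : R →L[𝕜] F) {t : 𝕜} {a : R} (h : ‖t • a‖ < 1)
    (k : ℕ) :
    HasSum (fun n => t ^ n • if k ≤ n then L (a ^ (n - k)) else 0)
      (t ^ k • L (Ring.inverse (1 - t • a))) := by
  rw [← hasSum_nat_add_iff' k]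
  have hhead : ∑ n ∈ Finset.range k, t ^ n • (if k ≤ n then L (a ^ (n - k)) else 0) = 0 :=
    Finset.sum_eq_zero fun n hn => by simp [(Finset.mem_range.mp hn).not_ge]
  simp only [hhead, sub_zero, le_add_iff_nonneg_left, zero_le, if_true, Nat.add_sub_cancel]
  convert ((L.hasSum (hasSum_geom_series_inverse _ h)).const_smul (t ^ k)) using 2 with n
  rw [smul_pow, map_smul, smul_smul, pow_add, mul_comm]

theorem HasFPowerSeriesAt.apply_const_eq_of_eventuallyEq_resolvent {f : E → F}
    {p : FormalMultilinearSeries 𝕜 E F} (hp : HasFPowerSeriesAt f p 0) {a : E → R}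
    (ha : ∀ (t : 𝕜) z, a (t • z) = t • a z) {M : E → R →L[𝕜] F} {k : ℕ}
    (hM : ∀ (t : 𝕜) z, M (t • z) = t ^ k • M z)
    (hf : ∀ᶠ z in 𝓝 0, f z = M z (Ring.inverse (1 - a z))) (z : E) (n : ℕ) :
    p n (fun _ => z) = if k ≤ n then M z (a z ^ (n - k)) else 0 := by
  refine hp.apply_const_eq_of_hasSum_smul z
    (c := fun n => if k ≤ n then M z (a z ^ (n - k)) else 0) ?_ n
  have hline : Tendsto (fun t : 𝕜 => t • z) (𝓝 0) (𝓝 0) :=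
    (continuous_id.smul continuous_const).tendsto' 0 0 (zero_smul 𝕜 z)
  have hsmall : ∀ᶠ t : 𝕜 in 𝓝 0, ‖t • a z‖ < 1 :=
    ((continuous_id.smul continuous_const).norm.tendsto' (0 : 𝕜) 0 (by simp)).eventually
      (gt_mem_nhds one_pos)
  filter_upwards [hline.eventually hf, hsmall] with t hft ht
  rw [hft, hM, ha, smul_apply]
  exact hasSum_pow_smul_map_geom_shift (M z) ht k

end Resolvent

section Operators

variable {𝕜 E U X X' Y : Type*} [NontriviallyNormedField 𝕜] [NormedAddCommGroup E]
  [NormedSpace 𝕜 E] [NormedAddCommGroup U] [NormedSpace 𝕜 U] [NormedAddCommGroup X]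
  [NormedSpace 𝕜 X] [NormedAddCommGroup X'] [NormedSpace 𝕜 X'] [NormedAddCommGroup Y]
  [NormedSpace 𝕜 Y]

namespace ContinuousLinearMap

def sandwich (P : X' →L[𝕜] Y) (Q : U →L[𝕜] X) : (X →L[𝕜] X') →L[𝕜] (U →L[𝕜] Y) :=
  (compL 𝕜 U X' Y P).comp ((compL 𝕜 U X X').flip Q)

@[simp]
theorem sandwich_apply (P : X' →L[𝕜] Y) (Q : U →L[𝕜] X) (D : X →L[𝕜] X') :
    sandwich P Q D = P.comp (D.comp Q) :=
  rfl

theorem sandwich_smul_smul (P : X' →L[𝕜] Y) (Q : U →L[𝕜] X) (s t : 𝕜) :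
    sandwich (s • P) (t • Q) = (s * t) • sandwich P Q := by
  ext D : 1
  simp [smul_smul, mul_comm]

end ContinuousLinearMap

theorem AnalyticAt.clm_comp {f : E → X →L[𝕜] Y} {g : E → U →L[𝕜] X} {x : E}
    (hf : AnalyticAt 𝕜 f x) (hg : AnalyticAt 𝕜 g x) :
    AnalyticAt 𝕜 (fun y => (f y).comp (g y)) x :=
  ((ContinuousLinearMap.compL 𝕜 U X Y).analyticAt_bilinear (f x, g x)).comp₂ hf hg

end Operators

section Pencil

variable {E F : Type*} [NormedAddCommGroup E] [NormedAddCommGroup F]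
  [NormedSpace ℂ E] [NormedSpace ℂ F]

theorem pencil_smul (T : Fin N → (E →L[ℂ] F)) (t : ℂ) (z : Fin N → ℂ) :
    pencil T (t • z) = t • pencil T z := by
  simp only [pencil, Finset.smul_sum, Pi.smul_apply, smul_eq_mul, mul_smul]

theorem pencil_zero (T : Fin N → (E →L[ℂ] F)) : pencil T 0 = 0 := by
  simp [pencil]

theorem analyticAt_pencil (T : Fin N → (E →L[ℂ] F)) (z : Fin N → ℂ) :
    AnalyticAt ℂ (pencil T) z := by
  unfold pencil
  exact Finset.analyticAt_fun_sum _ fun k _ =>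
    ((ContinuousLinearMap.proj k : (Fin N → ℂ) →L[ℂ] ℂ).analyticAt z).smul analyticAt_const

theorem analyticAt_inverse_one_sub_pencil [CompleteSpace E] (T : Fin N → (E →L[ℂ] E)) :
    AnalyticAt ℂ (fun z => Ring.inverse (1 - pencil T z)) 0 :=
  (analyticAt_inverse_one_sub ℂ _).comp_of_eq (analyticAt_pencil T 0) (pencil_zero T)

end Pencil

open ContinuousLinearMap

theorem inductive_step_factor_off_zC_general {N m : ℕ} {X U Y : Type}
    [NormedAddCommGroup X] [InnerProductSpace ℂ X] [CompleteSpace X]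
    [NormedAddCommGroup U] [InnerProductSpace ℂ U]
    [NormedAddCommGroup Y] [InnerProductSpace ℂ Y]
    (A : Fin N → (X →L[ℂ] X)) (B : Fin N → (U →L[ℂ] X)) (C : Fin N → (X →L[ℂ] Y))
    (θ : (Fin N → ℂ) → (U →L[ℂ] Y)) (θt : (Fin N → ℂ) → (U →L[ℂ] X))
    (hθ : ∀ᶠ z in nhds 0, IsUnit (1 - pencil A z) ∧
      θ z = (pencil C z).comp ((Ring.inverse (1 - pencil A z)).comp (pencil B z)))
    (hθt : ∀ᶠ z in nhds 0, θt z =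
      ((pencil A z) ^ (m - 2)).comp ((Ring.inverse (1 - pencil A z)).comp (pencil B z)))
    (hm : 2 ≤ m) (hzero : HasZeroOfOrder θ m) :
    (∀ᶠ z in nhds 0, θ z = (pencil C z).comp (θt z)) ∧ HasZeroOfOrder θt (m - 1) := by
  obtain ⟨p, hp, hp_low, z₀, hz₀⟩ := hzero
  have hθ_coeff : ∀ z n, p n (fun _ => z) =
      if 2 ≤ n then sandwich (pencil C z) (pencil B z) (pencil A z ^ (n - 2)) else 0 :=
    hp.apply_const_eq_of_eventuallyEq_resolvent (pencil_smul A)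
      (fun t z => by simp only [pencil_smul, sandwich_smul_smul, sq])
      (hθ.mono fun z hz => by simp [hz.2])
  have hvanish : ∀ z, ∀ j < m - 2, sandwich (pencil C z) (pencil B z) (pencil A z ^ j) = 0 :=
    fun z j hj => by simpa [hθ_coeff] using hp_low (j + 2) (by omega) z
  refine ⟨?_, ?_⟩
  · filter_upwards [hθ, hθt] with z ⟨hunit, hθz⟩ hθtz
    have hsplit := congrArg (sandwich (pencil C z) (pencil B z))
      (Ring.inverse_one_sub_eq_pow_mul_add_geom_sum hunit (m - 2))
    rw [map_add, map_sum, Finset.sum_eq_zero fun j hj => hvanish z j (Finset.mem_range.mp hj),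
      add_zero] at hsplit
    simpa [hθz, hθtz, mul_def, comp_assoc] using hsplit
  · obtain ⟨q, hq⟩ : AnalyticAt ℂ θt 0 :=
      (((analyticAt_pencil A 0).pow _).clm_comp
        ((analyticAt_inverse_one_sub_pencil A).clm_comp (analyticAt_pencil B 0))).congr
        (hθt.mono fun z hz => hz.symm)
    have hθt_coeff : ∀ z n, q n (fun _ => z) = if m - 1 ≤ n then
        sandwich (pencil A z ^ (m - 2)) (pencil B z) (pencil A z ^ (n - (m - 1))) else 0 :=
      hq.apply_const_eq_of_eventuallyEq_resolvent (pencil_smul A) (fun t z => by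
        simp only [pencil_smul, smul_pow, sandwich_smul_smul, ← pow_succ]
        rw [show m - 2 + 1 = m - 1 by omega])
      (hθt.mono fun z hz => by simp [hz])
    refine ⟨q, hq, fun j hj z => by rw [hθt_coeff, if_neg (by omega)], z₀, fun h => hz₀ ?_⟩
    rw [hθt_coeff, if_pos le_rfl, Nat.sub_self, pow_zero, sandwich_apply, one_def, id_comp] at h
    rw [hθ_coeff, if_pos hm, sandwich_apply, h, comp_zero]

/-- the inductive step of the linear-factor extraction theorem: if
`θ(z) = zC(I − zA)⁻¹zB` has a zero of multiplicity `m ≥ 2` at `0`, then `θ(z) = (zC)·θ̃(z)`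
near `0`, where `θ̃(z) = (zA)^{m−2}(I − zA)⁻¹zB` has a zero of multiplicity exactly `m − 1`. -/
theorem inductive_step_factor_off_zC {N m : ℕ} {X U Y : Type}
    [NormedAddCommGroup X] [InnerProductSpace ℂ X] [CompleteSpace X]
    [TopologicalSpace.SeparableSpace X]
    [NormedAddCommGroup U] [InnerProductSpace ℂ U] [CompleteSpace U]
    [TopologicalSpace.SeparableSpace U]
    [NormedAddCommGroup Y] [InnerProductSpace ℂ Y] [CompleteSpace Y]
    [TopologicalSpace.SeparableSpace Y]
    (A : Fin N → (X →L[ℂ] X)) (B : Fin N → (U →L[ℂ] X)) (C : Fin N → (X →L[ℂ] Y))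
    (θ : (Fin N → ℂ) → (U →L[ℂ] Y)) (θt : (Fin N → ℂ) → (U →L[ℂ] X))
    (hθ : ∀ᶠ z in nhds 0, IsUnit (1 - pencil A z) ∧
      θ z = (pencil C z).comp ((Ring.inverse (1 - pencil A z)).comp (pencil B z)))
    (hθt : ∀ᶠ z in nhds 0, θt z =
      ((pencil A z) ^ (m - 2)).comp ((Ring.inverse (1 - pencil A z)).comp (pencil B z)))
    (hm : 2 ≤ m) (hzero : HasZeroOfOrder θ m) :
    (∀ᶠ z in nhds 0, θ z = (pencil C z).comp (θt z)) ∧ HasZeroOfOrder θt (m - 1) :=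
  inductive_step_factor_off_zC_general A B C θ θt hθ hθt hm hzero
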